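/- Let F be an algebraically closed field of characteristic zero and let a ∈ F(t) be a univariate rational function. Then there exist g_0 ∈ F(t), a natural number L, pairwise distinct elements β_1, …, β_L ∈ F, and constants γ_1, …, γ_L ∈ F such that a = D(g_0) + Σ_{ℓ=1}^{L} γ_ℓ/(t − β_ℓ), where D is the derivative with respect to t. (Base case of the multivariate Christopher theorem.) -/

import Mathlib

/-!
Over an algebraically closed field, partial fractions write every rational function as a
polynomial plus an `F`-linear combination of the powers `(t - β)⁻¹ ^ k`. In characteristic zero
every polynomial has an antiderivative, and for `k ≥ 2` the power `(t - β)⁻¹ ^ k` is, up to the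
nonzero constant `-(k - 1)`, the derivative of `(t - β)⁻¹ ^ (k - 1)`. Only the simple poles
`γ / (t - β)` remain.
-/

open scoped Polynomial

theorem Polynomial.exists_derivative_eq {F : Type*} [Field F] [CharZero F] (p : F[X]) :
    ∃ P : F[X], derivative P = p := by
  refine ⟨∑ i ∈ Finset.range (p.natDegree + 1), C (p.coeff i / (i + 1)) * X ^ (i + 1), ?_⟩
  rw [derivative_sum]
  conv_rhs => rw [p.as_sum_range_C_mul_X_pow]
  refine Finset.sum_congr rfl fun i _ => ?_
  rw [derivative_C_mul_X_pow]
  push_cast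
  rw [div_mul_cancel₀ _ (Nat.cast_add_one_ne_zero i)]

theorem Finset.exists_fin_injective_sum_eq {α M : Type*} [AddCommMonoid M] (s : Finset α)
    (f : α → M) : ∃ (L : ℕ) (β : Fin L → α), Function.Injective β ∧ ∑ a ∈ s, f a = ∑ ℓ, f (β ℓ) :=
  ⟨s.card, (↑) ∘ s.equivFin.symm, Subtype.coe_injective.comp s.equivFin.symm.injective, by
    rw [← Finset.sum_coe_sort, ← Equiv.sum_comp s.equivFin.symm]; rfl⟩

namespace RatFunc

variable {F : Type*} [Field F]

theorem X_sub_C_ne_zero (β : F) : (X - C β : RatFunc F) ≠ 0 := by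
  simpa using algebraMap_ne_zero (Polynomial.X_sub_C_ne_zero β)

theorem algebraMap_eq_prod_X_sub_C_pow [IsAlgClosed F] [DecidableEq F] {q : F[X]}
    (hq : q.Monic) :
    algebraMap F[X] (RatFunc F) q = ∏ β ∈ q.roots.toFinset, (X - C β) ^ q.roots.count β := by
  conv_lhs => rw [← Polynomial.prod_multiset_X_sub_C_of_monic_of_roots_card_eq hq
    IsAlgClosed.card_roots_eq_natDegree]
  simp [Finset.prod_multiset_map_count]

theorem span_algebraMap_union_inv_X_sub_C_pow_eq_top [IsAlgClosed F] :
    Submodule.span F (Set.range (algebraMap F[X] (RatFunc F)) ∪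
      Set.range fun x : F × ℕ => (X - C x.1)⁻¹ ^ x.2) = ⊤ := by
  classical
  refine eq_top_iff.2 fun f _ => ?_
  have hgi (β : F) : (X - C β)⁻¹ * algebraMap F[X] (RatFunc F) (.X - .C β) = 1 := by
    simpa using inv_mul_cancel₀ (X_sub_C_ne_zero β)
  obtain ⟨p, r, hr, hf⟩ := Polynomial.mul_prod_pow_inverse_eq_quo_add_sum_rem_mul_pow_inverse
    f.num (s := f.denom.roots.toFinset) (fun β _ => Polynomial.monic_X_sub_C β)
    (fun β _ γ _ h => Polynomial.pairwise_coprime_X_sub_C Function.injective_id h)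
    (fun β => f.denom.roots.count β) (fun β _ => hgi β)
  have hfrac : f = algebraMap F[X] (RatFunc F) f.num *
      ∏ β ∈ f.denom.roots.toFinset, (X - C β)⁻¹ ^ f.denom.roots.count β := by
    conv_lhs => rw [← f.num_div_denom, algebraMap_eq_prod_X_sub_C_pow f.monic_denom]
    simp only [div_eq_mul_inv, ← Finset.prod_inv_distrib, inv_pow]
  rw [hfrac, hf]
  refine add_mem (Submodule.subset_span (Or.inl ⟨p, rfl⟩))
    (Submodule.sum_mem _ fun β hβ => Submodule.sum_mem _ fun j _ => ?_)
  have hconst : r β j = .C ((r β j).coeff 0) := Polynomial.eq_C_of_degree_le_zero <|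
    Nat.WithBot.lt_one_iff_le_zero.1 (by simpa using hr β hβ j)
  rw [hconst, algebraMap_C, ← algebraMap_eq_C, ← Algebra.smul_def]
  exact Submodule.smul_mem _ _ (Submodule.subset_span (Or.inr ⟨(β, j + 1), rfl⟩))

variable (D : Derivation F (RatFunc F) (RatFunc F))

noncomputable def rangeSupSimpleFractions : Submodule F (RatFunc F) :=
  LinearMap.range D.toLinearMap ⊔ Submodule.span F (Set.range fun β : F => (X - C β)⁻¹)

theorem apply_mem_rangeSupSimpleFractions (g : RatFunc F) : D g ∈ rangeSupSimpleFractions D :=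
  Submodule.mem_sup_left ⟨g, rfl⟩

theorem inv_X_sub_C_mem_rangeSupSimpleFractions (β : F) :
    (X - C β)⁻¹ ∈ rangeSupSimpleFractions D :=
  Submodule.mem_sup_right (Submodule.subset_span ⟨β, rfl⟩)

variable {D}

theorem mem_rangeSupSimpleFractions_iff {f : RatFunc F} :
    f ∈ rangeSupSimpleFractions D ↔
      ∃ (g : RatFunc F) (γ : F →₀ F), f = D g + γ.sum fun β c => C c / (X - C β) := by
  simp only [rangeSupSimpleFractions, Submodule.mem_sup, LinearMap.mem_range,
    Finsupp.mem_span_range_iff_exists_finsupp, Algebra.smul_def, algebraMap_eq_C, div_eq_mul_inv]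
  constructor
  · rintro ⟨_, ⟨g, rfl⟩, _, ⟨γ, rfl⟩, rfl⟩
    exact ⟨g, γ, rfl⟩
  · rintro ⟨g, γ, rfl⟩
    exact ⟨_, ⟨g, rfl⟩, _, ⟨γ, rfl⟩, rfl⟩

theorem inv_X_sub_C_pow_mem_rangeSupSimpleFractions [CharZero F] (hX : D X = 1) (β : F) :
    ∀ k : ℕ, (X - C β)⁻¹ ^ k ∈ rangeSupSimpleFractions D
  | 0 => by simpa [hX] using apply_mem_rangeSupSimpleFractions D X
  | 1 => by simpa using inv_X_sub_C_mem_rangeSupSimpleFractions D β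
  | k + 2 => by
    have hderiv : D ((X - C β)⁻¹ ^ (k + 1)) = -(k + 1 : F) • (X - C β)⁻¹ ^ (k + 2) := by
      rw [Derivation.leibniz_pow, Derivation.leibniz_inv, map_sub, hX, ← algebraMap_eq_C,
        Derivation.map_algebraMap, sub_zero, Nat.add_sub_cancel]
      simp only [smul_eq_mul, nsmul_eq_mul, Algebra.smul_def, map_neg, map_add, map_natCast,
        map_one, Nat.cast_add, Nat.cast_one]
      ring
    have hk : (-(k + 1 : F)) ≠ 0 := neg_ne_zero.2 (Nat.cast_add_one_ne_zero k)
    rw [← inv_smul_smul₀ hk ((X - C β)⁻¹ ^ (k + 2)), ← hderiv]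
    exact Submodule.smul_mem _ _ (apply_mem_rangeSupSimpleFractions D _)

theorem algebraMap_mem_rangeSupSimpleFractions [CharZero F]
    (hD : ∀ p : F[X], D (algebraMap F[X] (RatFunc F) p)
      = algebraMap F[X] (RatFunc F) (Polynomial.derivative p)) (p : F[X]) :
    algebraMap F[X] (RatFunc F) p ∈ rangeSupSimpleFractions D := by
  obtain ⟨P, rfl⟩ := p.exists_derivative_eq
  rw [← hD]
  exact apply_mem_rangeSupSimpleFractions D _

theorem rangeSupSimpleFractions_eq_top [IsAlgClosed F] [CharZero F]
    (hD : ∀ p : F[X], D (algebraMap F[X] (RatFunc F) p)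
      = algebraMap F[X] (RatFunc F) (Polynomial.derivative p)) :
    rangeSupSimpleFractions D = ⊤ := by
  have hX : D X = 1 := by simpa using hD Polynomial.X
  rw [eq_top_iff, ← span_algebraMap_union_inv_X_sub_C_pow_eq_top, Submodule.span_le]
  rintro _ (⟨p, rfl⟩ | ⟨⟨β, k⟩, rfl⟩)
  · exact algebraMap_mem_rangeSupSimpleFractions hD p
  · exact inv_X_sub_C_pow_mem_rangeSupSimpleFractions hX β k

end RatFunc

theorem christopher_base_case
    (F : Type*) [Field F] [IsAlgClosed F] [CharZero F]
    (D : Derivation F (RatFunc F) (RatFunc F))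
    (hD : ∀ p : Polynomial F,
      D (algebraMap (Polynomial F) (RatFunc F) p)
        = algebraMap (Polynomial F) (RatFunc F) (Polynomial.derivative p))
    (a : RatFunc F) :
    ∃ (g₀ : RatFunc F) (L : ℕ) (β γ : Fin L → F),
      Function.Injective β ∧
      a = D g₀ + ∑ ℓ, RatFunc.C (γ ℓ) / (RatFunc.X - RatFunc.C (β ℓ)) := by
  obtain ⟨g, γ, ha⟩ := RatFunc.mem_rangeSupSimpleFractions_iff.1
    ((RatFunc.rangeSupSimpleFractions_eq_top hD).symm ▸ Submodule.mem_top (x := a))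
  obtain ⟨L, β, hβ, hsum⟩ := γ.support.exists_fin_injective_sum_eq fun b =>
    RatFunc.C (γ b) / (RatFunc.X - RatFunc.C b)
  exact ⟨g, L, β, γ ∘ β, hβ, by rw [ha, Finsupp.sum, hsum]; rfl⟩
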